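/- arXiv:0909.0178 — 2 statements merged into one kernel-verified Lean document; each statement's English description precedes it below -/
import Mathlib

section
/- Fix n ≥ 1, real numbers a, b, and an invertible diagonal real n×n matrix Λ. Define Δ = (b−a)²I + 4Λ² (a diagonal matrix), r^± = (a+b ± √Δ)/2, f^± = (2Δ ± 2(b−a)√Δ)^{−1/2} (diagonal matrices, assuming the quantities under the square roots are positive), and the 2n×2n block matrices T = [[aI, Λ],[Λ, bI]], D = [[r^+, 0],[0, r^−]], P = [[2Λf^+, 2Λf^−],[(b−a)f^+ + √Δ f^+, (b−a)f^− − √Δ f^−]]. Then P is an orthogonal matrix and T = P D Pᵗ. -/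
open Matrix Real

private lemma scal (a b dd s rp rm fp fm : ℝ) (hs : s ≠ 0)
    (hsc : s + (b - a) ≠ 0) (hsc' : s - (b - a) ≠ 0)
    (hdd : 4 * dd ^ 2 = (s + (b - a)) * (s - (b - a)))
    (hrp : rp = (a + b + s) / 2) (hrm : rm = (a + b - s) / 2)
    (hfp : fp ^ 2 = (2 * s * (s + (b - a)))⁻¹)
    (hfm : fm ^ 2 = (2 * s * (s - (b - a)))⁻¹) :
    (2*dd*fp) * (2*dd*fp) + (2*dd*fm) * (2*dd*fm) = 1 ∧
    (2*dd*fp) * ((b-a)*fp + s*fp) + (2*dd*fm) * ((b-a)*fm - s*fm) = 0 ∧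
    ((b-a)*fp + s*fp) * ((b-a)*fp + s*fp) + ((b-a)*fm - s*fm) * ((b-a)*fm - s*fm) = 1 ∧
    (2*dd*fp) * (2*dd*fp) + ((b-a)*fp + s*fp) * ((b-a)*fp + s*fp) = 1 ∧
    (2*dd*fp) * (2*dd*fm) + ((b-a)*fp + s*fp) * ((b-a)*fm - s*fm) = 0 ∧
    (2*dd*fm) * (2*dd*fm) + ((b-a)*fm - s*fm) * ((b-a)*fm - s*fm) = 1 ∧
    (2*dd*fp) * rp * (2*dd*fp) + (2*dd*fm) * rm * (2*dd*fm) = a ∧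
    (2*dd*fp) * rp * ((b-a)*fp + s*fp) + (2*dd*fm) * rm * ((b-a)*fm - s*fm) = dd ∧
    ((b-a)*fp + s*fp) * rp * ((b-a)*fp + s*fp) + ((b-a)*fm - s*fm) * rm * ((b-a)*fm - s*fm) = b := by
  subst hrp hrm
  refine ⟨?_, ?_, ?_, ?_, ?_, ?_, ?_, ?_, ?_⟩
  · have e : (2*dd*fp) * (2*dd*fp) + (2*dd*fm) * (2*dd*fm)
        = 4 * dd ^ 2 * (fp ^ 2 + fm ^ 2) := by ring
    rw [e, hdd, hfp, hfm]; field_simp; ring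
  · have e : (2*dd*fp) * ((b-a)*fp + s*fp) + (2*dd*fm) * ((b-a)*fm - s*fm)
        = 2*dd*(((b-a)+s) * fp ^ 2 + ((b-a)-s) * fm ^ 2) := by ring
    rw [e, hfp, hfm]; field_simp; ring
  · have e : ((b-a)*fp + s*fp) * ((b-a)*fp + s*fp) + ((b-a)*fm - s*fm) * ((b-a)*fm - s*fm)
        = ((b-a)+s)^2 * fp ^ 2 + ((b-a)-s)^2 * fm ^ 2 := by ring
    rw [e, hfp, hfm]; field_simp; ring
  · have e : (2*dd*fp) * (2*dd*fp) + ((b-a)*fp + s*fp) * ((b-a)*fp + s*fp)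
        = (4 * dd ^ 2 + ((b-a)+s)^2) * fp ^ 2 := by ring
    rw [e, hdd, hfp]; field_simp; ring
  · linear_combination (fp * fm) * hdd
  · have e : (2*dd*fm) * (2*dd*fm) + ((b-a)*fm - s*fm) * ((b-a)*fm - s*fm)
        = (4 * dd ^ 2 + ((b-a)-s)^2) * fm ^ 2 := by ring
    rw [e, hdd, hfm]; field_simp; ring
  · have e : (2*dd*fp) * ((a+b+s)/2) * (2*dd*fp) + (2*dd*fm) * ((a+b-s)/2) * (2*dd*fm)
        = 4 * dd ^ 2 * (((a+b+s)/2) * fp ^ 2 + ((a+b-s)/2) * fm ^ 2) := by ring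
    rw [e, hdd, hfp, hfm]; field_simp; ring
  · have e : (2*dd*fp) * ((a+b+s)/2) * ((b-a)*fp + s*fp) + (2*dd*fm) * ((a+b-s)/2) * ((b-a)*fm - s*fm)
        = 2*dd*(((a+b+s)/2) * ((b-a)+s) * fp ^ 2 + ((a+b-s)/2) * ((b-a)-s) * fm ^ 2) := by ring
    rw [e, hfp, hfm]; field_simp; ring
  · have e : ((b-a)*fp + s*fp) * ((a+b+s)/2) * ((b-a)*fp + s*fp) + ((b-a)*fm - s*fm) * ((a+b-s)/2) * ((b-a)*fm - s*fm)
        = ((a+b+s)/2) * ((b-a)+s)^2 * fp ^ 2 + ((a+b-s)/2) * ((b-a)-s)^2 * fm ^ 2 := by ring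
    rw [e, hfp, hfm]; field_simp; ring
open Matrix Real

/-- diagonalization of the 2n×2n block matrix `[[aI, Λ],[Λ, bI]]`
with `Λ` invertible diagonal: with `Δ = (b-a)² + 4Λ²`, `r^± = (a+b ± √Δ)/2`,
`f^± = (2Δ ± 2(b-a)√Δ)^{-1/2}`, the matrix `P` below is orthogonal and
`T = P D Pᵀ`. -/
theorem stmt3 (n : ℕ) (hn : 1 ≤ n) (a b : ℝ) (d : Fin n → ℝ)
    (hd : ∀ i, d i ≠ 0)
    (Δ : Fin n → ℝ) (hΔdef : ∀ i, Δ i = (b - a) ^ 2 + 4 * d i ^ 2)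
    (hΔpos : ∀ i, 0 < Δ i)
    (hfp : ∀ i, 0 < 2 * Δ i + 2 * (b - a) * Real.sqrt (Δ i))
    (hfm : ∀ i, 0 < 2 * Δ i - 2 * (b - a) * Real.sqrt (Δ i))
    (rp rm fp fm : Fin n → ℝ)
    (hrp : ∀ i, rp i = (a + b + Real.sqrt (Δ i)) / 2)
    (hrm : ∀ i, rm i = (a + b - Real.sqrt (Δ i)) / 2)
    (hfpdef : ∀ i, fp i = (Real.sqrt (2 * Δ i + 2 * (b - a) * Real.sqrt (Δ i)))⁻¹)
    (hfmdef : ∀ i, fm i = (Real.sqrt (2 * Δ i - 2 * (b - a) * Real.sqrt (Δ i)))⁻¹)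
    (T D P : Matrix (Fin n ⊕ Fin n) (Fin n ⊕ Fin n) ℝ)
    (hT : T = Matrix.fromBlocks (a • (1 : Matrix (Fin n) (Fin n) ℝ)) (Matrix.diagonal d)
        (Matrix.diagonal d) (b • (1 : Matrix (Fin n) (Fin n) ℝ)))
    (hD : D = Matrix.fromBlocks (Matrix.diagonal rp) 0 0 (Matrix.diagonal rm))
    (hP : P = Matrix.fromBlocks
        (Matrix.diagonal (fun i => 2 * d i * fp i))
        (Matrix.diagonal (fun i => 2 * d i * fm i))
        (Matrix.diagonal (fun i => (b - a) * fp i + Real.sqrt (Δ i) * fp i))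
        (Matrix.diagonal (fun i => (b - a) * fm i - Real.sqrt (Δ i) * fm i))) :
    P * Pᵀ = 1 ∧ Pᵀ * P = 1 ∧ T = P * D * Pᵀ := by
  subst hT hD hP
  have hs2 : ∀ i, Real.sqrt (Δ i) ^ 2 = Δ i := fun i => Real.sq_sqrt (hΔpos i).le
  have hspos : ∀ i, 0 < Real.sqrt (Δ i) := fun i => Real.sqrt_pos.2 (hΔpos i)
  have hsc : ∀ i, Real.sqrt (Δ i) + (b - a) ≠ 0 := by
    intro i hc
    have h := hfp i
    have hbe : b - a = - Real.sqrt (Δ i) := by linarith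
    rw [hbe] at h
    nlinarith [hs2 i]
  have hsc' : ∀ i, Real.sqrt (Δ i) - (b - a) ≠ 0 := by
    intro i hc
    have h := hfm i
    have hbe : b - a = Real.sqrt (Δ i) := by linarith
    rw [hbe] at h
    nlinarith [hs2 i]
  have hdd : ∀ i, 4 * d i ^ 2 =
      (Real.sqrt (Δ i) + (b - a)) * (Real.sqrt (Δ i) - (b - a)) := by
    intro i; linarith [hs2 i, hΔdef i]
  have hfp2 : ∀ i, fp i ^ 2 = (2 * Real.sqrt (Δ i) * (Real.sqrt (Δ i) + (b - a)))⁻¹ := by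
    intro i
    rw [hfpdef i, inv_pow, Real.sq_sqrt (hfp i).le]
    congr 1
    linarith [hs2 i]
  have hfm2 : ∀ i, fm i ^ 2 = (2 * Real.sqrt (Δ i) * (Real.sqrt (Δ i) - (b - a)))⁻¹ := by
    intro i
    rw [hfmdef i, inv_pow, Real.sq_sqrt (hfm i).le]
    congr 1
    linarith [hs2 i]
  have key := fun i => scal a b (d i) (Real.sqrt (Δ i)) (rp i) (rm i) (fp i) (fm i)
    (hspos i).ne' (hsc i) (hsc' i) (hdd i) (hrp i) (hrm i) (hfp2 i) (hfm2 i)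
  refine ⟨?_, ?_, ?_⟩
  · rw [← Matrix.fromBlocks_one]
    simp only [Matrix.fromBlocks_transpose, Matrix.diagonal_transpose, Matrix.fromBlocks_multiply,
      Matrix.diagonal_mul_diagonal, Matrix.diagonal_add, Matrix.fromBlocks_inj,
      ← Matrix.diagonal_one, ← Matrix.diagonal_zero]
    refine ⟨?_, ?_, ?_, ?_⟩ <;>
      (refine congrArg _ (funext fun i => ?_); beta_reduce)
    · linear_combination (key i).1
    · linear_combination (key i).2.1
    · linear_combination (key i).2.1
    · linear_combination (key i).2.2.1
  · rw [← Matrix.fromBlocks_one]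
    simp only [Matrix.fromBlocks_transpose, Matrix.diagonal_transpose, Matrix.fromBlocks_multiply,
      Matrix.diagonal_mul_diagonal, Matrix.diagonal_add, Matrix.fromBlocks_inj,
      ← Matrix.diagonal_one, ← Matrix.diagonal_zero]
    refine ⟨?_, ?_, ?_, ?_⟩ <;>
      (refine congrArg _ (funext fun i => ?_); beta_reduce)
    · linear_combination (key i).2.2.2.1
    · linear_combination (key i).2.2.2.2.1
    · linear_combination (key i).2.2.2.2.1
    · linear_combination (key i).2.2.2.2.2.1
  · simp only [Matrix.fromBlocks_transpose, Matrix.diagonal_transpose, Matrix.fromBlocks_multiply,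
      Matrix.diagonal_mul_diagonal, Matrix.mul_zero, Matrix.zero_mul, add_zero,
      zero_add, Matrix.diagonal_add, Matrix.smul_one_eq_diagonal, Matrix.fromBlocks_inj]
    refine ⟨?_, ?_, ?_, ?_⟩ <;>
      (refine congrArg _ (funext fun i => ?_); beta_reduce)
    · linear_combination ((key i).2.2.2.2.2.2.1).symm
    · linear_combination ((key i).2.2.2.2.2.2.2.1).symm
    · linear_combination ((key i).2.2.2.2.2.2.2.1).symm
    · linear_combination ((key i).2.2.2.2.2.2.2.2).symm
end

section
/- Let μ be a probability measure supported in [−K,K] and λ ∈ [0,1]. Then C^{(λ)}_μ(z) ≥ 0 for all z ∈ [0, K^{−2}). -/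
open MeasureTheory

noncomputable def Mfun (μ : Measure ℝ) (z : ℝ) : ℝ := ∫ t, t ^ 2 * z / (1 - t ^ 2 * z) ∂μ

noncomputable def Tfun (lam z : ℝ) : ℝ := (lam * z + 1) * (z + 1)

noncomputable def Hfun (lam : ℝ) (μ : Measure ℝ) (z : ℝ) : ℝ := z * Tfun lam (Mfun μ z)

/-- For `μ` a probability measure supported in `[-K,K]` and
`λ ∈ [0,1]`, the rectangular R-transform satisfies `C^{(λ)}_μ(z) ≥ 0` for all
`z ∈ [0, K⁻²)`. Here `C^{(λ)}_μ(z)` is expressed via: `x = (H^{(λ)}_μ)⁻¹(z)`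
and `γ = (T^{(λ)})⁻¹(z/x)` for `z ≠ 0`, and `γ = 0` for `z = 0`. -/
theorem stmt8 (K : ℝ) (hK : 0 < K) (μ : Measure ℝ) [IsProbabilityMeasure μ]
    (hsupp : μ (Set.Icc (-K) K)ᶜ = 0) (lam : ℝ) (hlam : lam ∈ Set.Icc (0 : ℝ) 1)
    (z : ℝ) (hz : z ∈ Set.Ico (0 : ℝ) (K ^ 2)⁻¹)
    (x : ℝ) (hx : x ∈ Set.Ico (0 : ℝ) (K ^ 2)⁻¹) (hHx : Hfun lam μ x = z)
    (γ : ℝ) (hγ : -1 ≤ γ)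
    (hγdef : (z = 0 ∧ γ = 0) ∨ (z ≠ 0 ∧ Tfun lam γ = z / x)) :
    0 ≤ γ := by
  rcases hγdef with ⟨_, hγ0⟩ | ⟨hz0, hT⟩
  · simp [hγ0]
  obtain ⟨hx0, hx1⟩ := hx
  obtain ⟨hlam0, hlam1⟩ := hlam
  -- M(x) ≥ 0
  have hM : 0 ≤ Mfun μ x := by
    apply integral_nonneg_of_ae
    rw [Filter.EventuallyLE, ae_iff]
    refine measure_mono_null (fun t ht => ?_) hsupp
    simp only [Set.mem_compl_iff, Set.mem_Icc, not_and_or, not_le]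
    by_contra hmem
    push_neg at hmem
    apply ht
    have ht2 : t ^ 2 ≤ K ^ 2 := sq_le_sq' hmem.1 hmem.2
    have hlt : t ^ 2 * x < 1 := by
      calc t ^ 2 * x ≤ K ^ 2 * x := by
            exact mul_le_mul_of_nonneg_right ht2 hx0
        _ < K ^ 2 * (K ^ 2)⁻¹ := by
            exact mul_lt_mul_of_pos_left hx1 (by positivity)
        _ = 1 := mul_inv_cancel₀ (by positivity)
    have hnum : 0 ≤ t ^ 2 * x := by positivity
    exact div_nonneg hnum (by linarith)
  -- x > 0
  have hxpos : 0 < x := by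
    rcases hx0.lt_or_eq with h | h
    · exact h
    · exfalso; apply hz0; rw [← hHx, Hfun, ← h, zero_mul]
  -- T(M(x)) ≥ 1
  have hTM : 1 ≤ Tfun lam (Mfun μ x) := by
    unfold Tfun
    nlinarith [mul_nonneg hlam0 hM, mul_nonneg (mul_nonneg hlam0 hM) hM]
  -- z/x = T(M(x)) ≥ 1
  have hzx : 1 ≤ z / x := by
    rw [← hHx, Hfun, mul_comm, mul_div_assoc, div_self hxpos.ne', mul_one]
    exact hTM
  rw [← hT] at hzx
  by_contra hγneg
  push_neg at hγneg
  have h1 : lam * γ + 1 ≤ 1 := by nlinarith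
  have h2 : 0 ≤ lam * γ + 1 := by nlinarith
  have : Tfun lam γ < 1 := by
    unfold Tfun
    calc (lam * γ + 1) * (γ + 1) ≤ 1 * (γ + 1) := by nlinarith
      _ < 1 := by linarith
  linarith
end
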